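/- For the multicalibration boosting update with adaptive rescaling, the rescaling weight is nonnegative after the first step: if f = (⟨y, φ₀⟩ / ‖φ₀‖₂²) φ₀ for some nonzero vector φ₀ ∈ ℝ^n (i.e., f is the orthogonal projection of y onto the line spanned by φ₀), then the next update direction φ(f) = f + η A(f)(y − f) satisfies ⟨y, φ(f)⟩ ≥ 0; in particular, whenever φ(f) ≠ 0, the adaptive weight ω(f) = ⟨y, φ(f)⟩ / ‖φ(f)‖₂² is nonnegative. -/

import Mathlib

open Matrix
open scoped RealInnerProductSpace

/-! Both `f` and `g = A(f)(y - f)` are images under symmetric projections (of `y` and of `y - f`),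
so `⟪y, f⟫ = ‖f‖²` and `⟪y - f, g⟫ = ‖g‖²`. Hence `⟪y, f + η g⟫ = ‖f‖² + η⟪f, g⟫ + η‖g‖²`, which by
Cauchy–Schwarz is at least `‖f‖² - η‖f‖‖g‖ + η‖g‖²`, a quadratic form that is nonnegative for
`0 ≤ η ≤ 4`. -/

/-- The action of a real matrix on vectors of `EuclideanSpace`. -/
noncomputable def mulVecE {m n : Type*} [Fintype m] [Fintype n] [DecidableEq n]
    (A : Matrix m n ℝ) (v : EuclideanSpace ℝ n) : EuclideanSpace ℝ m :=
  Matrix.toEuclideanLin A v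

section

variable {E : Type*} [NormedAddCommGroup E] [InnerProductSpace ℝ E]

theorem LinearMap.IsSymmetricProjection.inner_apply_self_eq_norm_sq {T : E →ₗ[ℝ] E}
    (hT : T.IsSymmetricProjection) (v : E) : ⟪v, T v⟫ = ‖T v‖ ^ 2 := by
  conv_lhs => rw [← hT.isIdempotentElem, Module.End.mul_apply, ← hT.isSymmetric]
  exact real_inner_self_eq_norm_sq _

theorem inner_smul_div_norm_sq_eq_norm_sq (y v : E) :
    ⟪y, (⟪y, v⟫ / ‖v‖ ^ 2) • v⟫ = ‖(⟪y, v⟫ / ‖v‖ ^ 2) • v‖ ^ 2 := by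
  have hproj := Submodule.starProjection_singleton ℝ (v := v) y
  simp only [RCLike.ofReal_real_eq_id, id, real_inner_comm y v] at hproj
  rw [← hproj]
  exact (Submodule.isSymmetricProjection_starProjection _).inner_apply_self_eq_norm_sq y

theorem inner_add_smul_nonneg {y f g : E} {η : ℝ} (hf : ⟪y, f⟫ = ‖f‖ ^ 2)
    (hg : ⟪y - f, g⟫ = ‖g‖ ^ 2) (hη0 : 0 ≤ η) (hη4 : η ≤ 4) : 0 ≤ ⟪y, f + η • g⟫ := by
  have hexpand : ⟪y, f + η • g⟫ = ‖f‖ ^ 2 + η * ⟪f, g⟫ + η * ‖g‖ ^ 2 := by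
    rw [inner_add_right, real_inner_smul_right, hf, ← hg, inner_sub_left]
    ring
  have hcs : -(‖f‖ * ‖g‖) ≤ ⟪f, g⟫ := neg_le_of_abs_le (abs_real_inner_le_norm f g)
  -- ‖f‖² - η‖f‖‖g‖ + η‖g‖² = (‖f‖ - η‖g‖/2)² + η(1 - η/4)‖g‖²
  nlinarith [sq_nonneg (‖f‖ - η * ‖g‖ / 2), mul_nonneg (mul_nonneg hη0 (sub_nonneg.2 hη4))
    (sq_nonneg ‖g‖)]

end

theorem Matrix.isSymmetricProjection_toEuclideanLin {n : Type*} [Fintype n] [DecidableEq n]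
    {M : Matrix n n ℝ} (hsymm : Mᵀ = M) (hidem : M * M = M) :
    (toEuclideanLin M).IsSymmetricProjection where
  isIdempotentElem := by
    rw [IsIdempotentElem, Module.End.mul_eq_comp, ← toLpLin_mul_same, hidem]
  isSymmetric := isSymmetric_toEuclideanLin_iff.mpr (by simpa [IsHermitian] using hsymm)

theorem adaptive_rescaling_weight_nonneg_general
    {n : ℕ} (y : EuclideanSpace ℝ (Fin n)) (η : ℝ) (hη0 : 0 < η) (hη1 : η ≤ 1)
    (A : EuclideanSpace ℝ (Fin n) → Matrix (Fin n) (Fin n) ℝ)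
    (hAsymm : ∀ f, (A f)ᵀ = A f) (hAproj : ∀ f, A f * A f = A f)
    (φ₀ : EuclideanSpace ℝ (Fin n))
    (f φ : EuclideanSpace ℝ (Fin n))
    (hfdef : f = (⟪y, φ₀⟫ / ‖φ₀‖ ^ 2) • φ₀)
    (hφ : φ = f + η • mulVecE (A f) (y - f)) :
    0 ≤ ⟪y, φ⟫ ∧ (φ ≠ 0 → 0 ≤ ⟪y, φ⟫ / ‖φ‖ ^ 2) := by
  have hf : ⟪y, f⟫ = ‖f‖ ^ 2 := hfdef ▸ inner_smul_div_norm_sq_eq_norm_sq y φ₀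
  have hg : ⟪y - f, mulVecE (A f) (y - f)⟫ = ‖mulVecE (A f) (y - f)‖ ^ 2 :=
    (isSymmetricProjection_toEuclideanLin (hAsymm f) (hAproj f)).inner_apply_self_eq_norm_sq _
  have hyφ : 0 ≤ ⟪y, φ⟫ := hφ ▸ inner_add_smul_nonneg hf hg hη0.le (by linarith)
  exact ⟨hyφ, fun _ ↦ div_nonneg hyφ (sq_nonneg _)⟩

/-- **Nonnegativity of the adaptive rescaling weight after the first step.**
If `f = (⟨y, φ₀⟩/‖φ₀‖₂²) φ₀` for some nonzero `φ₀` (the projection of `y` onto the line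
spanned by `φ₀`), then `φ(f) = f + η A(f)(y - f)` satisfies `⟨y, φ(f)⟩ ≥ 0`; in particular,
whenever `φ(f) ≠ 0`, the adaptive weight `ω(f) = ⟨y, φ(f)⟩/‖φ(f)‖₂²` is nonnegative. -/
theorem adaptive_rescaling_weight_nonneg
    {n : ℕ} (y : EuclideanSpace ℝ (Fin n)) (η : ℝ) (hη0 : 0 < η) (hη1 : η ≤ 1)
    (A : EuclideanSpace ℝ (Fin n) → Matrix (Fin n) (Fin n) ℝ)
    (hAsymm : ∀ f, (A f)ᵀ = A f) (hAproj : ∀ f, A f * A f = A f)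
    (φ₀ : EuclideanSpace ℝ (Fin n)) (hφ₀ : φ₀ ≠ 0)
    (f φ : EuclideanSpace ℝ (Fin n))
    (hfdef : f = (⟪y, φ₀⟫ / ‖φ₀‖ ^ 2) • φ₀)
    (hφ : φ = f + η • mulVecE (A f) (y - f)) :
    0 ≤ ⟪y, φ⟫ ∧ (φ ≠ 0 → 0 ≤ ⟪y, φ⟫ / ‖φ‖ ^ 2) :=
  adaptive_rescaling_weight_nonneg_general y η hη0 hη1 A hAsymm hAproj φ₀ f φ hfdef hφ
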